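/- Let S_t = σ_t(M_t) be an information state with cost distribution ρ and let Λ^n be the n-th iterate of the operator 𝒯 starting from Λ^0 ≡ 0. Then for every n ∈ ℕ, every t ∈ ℕ and every realization m_t of the memory: γ^{n+t}·c^min/(1−γ) + γ^t·Λ^n(σ_t(m_t), γ^t) + sup_{a_t ∈ [[A_t | m_t]]} a_t ≤ V_t(m_t) ≤ sup_{a_t ∈ [[A_t | m_t]]} a_t + γ^t·Λ^n(σ_t(m_t), γ^t) + γ^{n+t}·c^max/(1−γ). -/

import Mathlib

open Set Filter

noncomputable section

/-- Hausdorff distance built from an arbitrary distance function `η`,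
`ℋ(A,B) = max{sup_{a∈A} inf_{b∈B} η a b, sup_{b∈B} inf_{a∈A} η a b}`. -/
def hausd {α : Type*} (η : α → α → ℝ) (A B : Set α) : ℝ :=
  max (sSup ((fun a => sInf ((fun b => η a b) '' B)) '' A))
      (sSup ((fun b => sInf ((fun a => η a b) '' A)) '' B))

/-- The time-invariant DP operator `𝒯` for general information states:
`[𝒯Λ](s,z) = inf_u sup_{c,s'} (c + γ·Λ(s',γz) + ρ(c,s'|s,u)/z)`, the sup being over the
support of the cost distribution `ρ` (off the support `ρ = −∞`). -/
def DPop {Ss Uu : Type*} (γ : ℝ) (ρ : ℝ → Ss → Ss → Uu → EReal)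
    (Λ : Ss → ℝ → ℝ) (s : Ss) (z : ℝ) : ℝ :=
  sInf (Set.range fun u : Uu => sSup ((fun p : ℝ × Ss =>
    p.1 + γ * Λ p.2 (γ * z) + (ρ p.1 p.2 s u).toReal / z) '' {p | ρ p.1 p.2 s u ≠ ⊥}))

/-- Iterates `Λ^n = 𝒯^n Λ^0` starting from `Λ^0 ≡ 0`. -/
def DPopIter {Ss Uu : Type*} (γ : ℝ) (ρ : ℝ → Ss → Ss → Uu → EReal) : ℕ → Ss → ℝ → ℝ
  | 0 => fun _ _ => 0
  | (n+1) => DPop γ ρ (DPopIter γ ρ n)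

/-- The law-dependent operator `𝒯(π)`. -/
def DPopLaw {Ss Uu : Type*} (γ : ℝ) (ρ : ℝ → Ss → Ss → Uu → EReal) (π : Ss → ℝ → Uu)
    (Λ : Ss → ℝ → ℝ) (s : Ss) (z : ℝ) : ℝ :=
  sSup ((fun p : ℝ × Ss =>
    p.1 + γ * Λ p.2 (γ * z) + (ρ p.1 p.2 s (π s z)).toReal / z) '' {p | ρ p.1 p.2 s (π s z) ≠ ⊥})

/-- Iterates `𝒯(π)^n Λ^0` starting from `Λ^0 ≡ 0`. -/
def DPopLawIter {Ss Uu : Type*} (γ : ℝ) (ρ : ℝ → Ss → Ss → Uu → EReal) (π : Ss → ℝ → Uu) :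
    ℕ → Ss → ℝ → ℝ
  | 0 => fun _ _ => 0
  | (n+1) => DPopLaw γ ρ π (DPopLawIter γ ρ π n)

/-- The time-invariant DP operator `𝒯̄` for problems with observable costs:
`[𝒯̄Λ̄](s̄) = inf_u sup_{(c,s̄') ∈ F(s̄,u)} (c + γ·Λ̄(s̄'))` where `F s̄ u = [[C, S̄' | s̄, u]]`. -/
def DPopB {Sb Uu : Type*} (γ : ℝ) (F : Sb → Uu → Set (ℝ × Sb)) (Λ : Sb → ℝ) (s : Sb) : ℝ :=
  sInf (Set.range fun u : Uu => sSup ((fun p : ℝ × Sb => p.1 + γ * Λ p.2) '' F s u))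

/-- Iterates `Λ̄^n = 𝒯̄^n Λ̄^0` starting from `Λ̄^0 ≡ 0`. -/
def DPopBIter {Sb Uu : Type*} (γ : ℝ) (F : Sb → Uu → Set (ℝ × Sb)) : ℕ → Sb → ℝ
  | 0 => fun _ => 0
  | (n+1) => DPopB γ F (DPopBIter γ F n)

/-- The law-dependent observable-cost operator. -/
def DPopBLaw {Sb Uu : Type*} (γ : ℝ) (F : Sb → Uu → Set (ℝ × Sb)) (π : Sb → Uu)
    (Λ : Sb → ℝ) (s : Sb) : ℝ :=
  sSup ((fun p : ℝ × Sb => p.1 + γ * Λ p.2) '' F s (π s))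

/-- `β_t(T)` error coefficients, fuel-indexed: `beta γ e k t = β_t(t+k)` with
`β_T(T) = γ^T·e` and `β_t(T) = β_{t+1}(T) + γ^t·e`. -/
def beta (γ e : ℝ) : ℕ → ℕ → ℝ
  | 0, t => γ ^ t * e
  | (k+1), t => beta γ e k (t+1) + γ ^ t * e

/-- A partially observed non-stochastic input–output system with bounded costs:
disturbances `W_t ∈ 𝒲`, actions `U_t ∈ 𝒰`, observations `Y_0 = h_0(W_0)`,
`Y_{t+1} = h_{t+1}(W_{0:t}, U_{0:t})`, and costs `C_t = d_t(W_{0:t}, U_{0:t}) ∈ 𝒞 ⊆ [cmin, cmax] ⊂ ℝ≥0`,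
with a discount factor `γ ∈ (0,1)`. -/
structure Sys where
  W : Type
  U : Type
  Y : Type
  [hW : Nonempty W]
  [hU : Nonempty U]
  [hY : Nonempty Y]
  γ : ℝ
  cmin : ℝ
  cmax : ℝ
  h0 : W → Y
  h : (t : ℕ) → (Fin (t+1) → W) → (Fin (t+1) → U) → Y
  d : (t : ℕ) → (Fin (t+1) → W) → (Fin (t+1) → U) → ℝ
  hγ0 : 0 < γ
  hγ1 : γ < 1
  hcmin : 0 ≤ cmin
  hcost : ∀ t ω υ, d t ω υ ∈ Set.Icc cmin cmax

attribute [instance] Sys.hW Sys.hU Sys.hY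

namespace Sys

variable (S : Sys)

/-- `a^max = c^max/(1-γ)`. -/
def amax : ℝ := S.cmax / (1 - S.γ)

/-- Memory space at time `t`: `M_t = (Y_{0:t}, U_{0:t-1})`. -/
abbrev Mem (t : ℕ) : Type := (Fin (t+1) → S.Y) × (Fin t → S.U)

/-- Control strategies `g = (g_0, g_1, …)`, `U_t = g_t(M_t)`. -/
abbrev Strat : Type := (t : ℕ) → S.Mem t → S.U

/-- The memory realization at time `0` generated by an initial observation `y_0`. -/
def mem0 (y : S.Y) : S.Mem 0 := (fun _ => y, Fin.elim0)

/-- Open-loop observation `Y_s` generated by disturbances `ω` and actions `u_{0:s-1}`. -/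
def oy (ω : ℕ → S.W) : (s : ℕ) → (Fin s → S.U) → S.Y
  | 0, _ => S.h0 (ω 0)
  | (t+1), υ => S.h t (fun i : Fin (t+1) => ω i) υ

/-- Open-loop cost `C_t` generated by disturbances `ω` and actions `u_{0:t}`. -/
def oc (ω : ℕ → S.W) (t : ℕ) (υ : Fin (t+1) → S.U) : ℝ :=
  S.d t (fun i : Fin (t+1) => ω i) υ

/-- Open-loop accrued cost `A_t = Σ_{ℓ<t} γ^ℓ C_ℓ`. -/
def oA (ω : ℕ → S.W) (t : ℕ) (υ : Fin t → S.U) : ℝ :=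
  ∑ ℓ : Fin t, S.γ ^ (ℓ : ℕ) *
    S.oc ω ℓ (fun j : Fin ((ℓ : ℕ) + 1) => υ ⟨j, by have := j.isLt; have := ℓ.isLt; omega⟩)

/-- Open-loop memory at time `t` generated by disturbances `ω` and actions `u_{0:t-1}`. -/
def omem (ω : ℕ → S.W) (t : ℕ) (υ : Fin t → S.U) : S.Mem t :=
  (fun i : Fin (t+1) =>
    S.oy ω i (fun j : Fin (i : ℕ) => υ ⟨j, by have := j.isLt; have := i.isLt; omega⟩), υ)

/-- Disturbance realizations consistent with the memory realization `m_t`. -/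
def consistent (t : ℕ) (m : S.Mem t) : Set (ℕ → S.W) := {ω | S.omem ω t m.2 = m}

/-- `[[A_t | m_t]]`, the conditional range of the accrued cost. -/
def Arange (t : ℕ) (m : S.Mem t) : Set ℝ :=
  (fun ω => S.oA ω t m.2) '' S.consistent t m

/-- Closed-loop memory `M_t` generated by strategy `g` and disturbances `ω`. -/
def memOf (g : S.Strat) (ω : ℕ → S.W) : (t : ℕ) → S.Mem t
  | 0 => (fun _ => S.h0 (ω 0), Fin.elim0)
  | (t+1) =>
    let m := memOf g ω t
    let us : Fin (t+1) → S.U := Fin.snoc m.2 (g t m)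
    (Fin.snoc m.1 (S.h t (fun i : Fin (t+1) => ω i) us), us)

/-- Closed-loop action `U_t = g_t(M_t)`. -/
def act (g : S.Strat) (ω : ℕ → S.W) (t : ℕ) : S.U := g t (S.memOf g ω t)

/-- Closed-loop cost `C_t`. -/
def ccost (g : S.Strat) (ω : ℕ → S.W) (t : ℕ) : ℝ :=
  S.d t (fun i : Fin (t+1) => ω i) (fun i : Fin (t+1) => S.act g ω i)

/-- Closed-loop accrued cost `A_t = Σ_{ℓ<t} γ^ℓ C_ℓ`. -/
def cA (g : S.Strat) (ω : ℕ → S.W) (t : ℕ) : ℝ :=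
  ∑ ℓ ∈ Finset.range t, S.γ ^ ℓ * S.ccost g ω ℓ

/-- Closed-loop cost-to-go `C_t^∞ = Σ_{ℓ≥t} γ^{ℓ-t} C_ℓ`. -/
def cCinf (g : S.Strat) (ω : ℕ → S.W) (t : ℕ) : ℝ :=
  ∑' k : ℕ, S.γ ^ k * S.ccost g ω (t + k)

/-- Strategy value function
`V_t^g(m_t) = sup_{(a,c^∞) ∈ [[A_t, C_t^∞ | m_t]]^g} (a + γ^t c^∞)`. -/
def V (g : S.Strat) (t : ℕ) (m : S.Mem t) : ℝ :=
  sSup ((fun ω => S.cA g ω t + S.γ ^ t * S.cCinf g ω t) '' {ω | S.memOf g ω t = m})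

/-- Optimal value function `V_t(m_t) = inf_g V_t^g(m_t)`
(the infimum over strategies consistent with the realization `m_t`). -/
def Vopt (t : ℕ) (m : S.Mem t) : ℝ :=
  sInf ((fun g => S.V g t m) '' {g : S.Strat | ∃ ω, S.memOf g ω t = m})

/-- Strategy-dependent finite-horizon function, fuel-indexed:
`Jg g n t m = J_t^g(m_t; t+n)` with `J_T^g(m_T;T) = sup_{[[A_T,C_T|m_T]]^g}(a_T + γ^T c_T)` and
`J_t^g(m_t;T) = sup_{m_{t+1} ∈ [[M_{t+1}|m_t]]^g} J_{t+1}^g(m_{t+1};T)`. -/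
def Jg (g : S.Strat) : ℕ → (t : ℕ) → S.Mem t → ℝ
  | 0, t, m => sSup ((fun ω => S.cA g ω t + S.γ ^ t * S.ccost g ω t) '' {ω | S.memOf g ω t = m})
  | (n+1), t, m =>
    sSup ((fun ω => Jg g n (t+1) (S.memOf g ω (t+1))) '' {ω | S.memOf g ω t = m})

/-- Optimal finite-horizon function, fuel-indexed: `Jopt n t m = J_t(m_t; t+n)` with
`J_T(m_T;T) = inf_{u_T} sup_{[[A_T,C_T|m_T,u_T]]}(a_T + γ^T c_T)` and
`J_t(m_t;T) = inf_{u_t} sup_{m_{t+1} ∈ [[M_{t+1}|m_t,u_t]]} J_{t+1}(m_{t+1};T)`. -/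
def Jopt : ℕ → (t : ℕ) → S.Mem t → ℝ
  | 0, t, m => sInf (Set.range fun u : S.U =>
      sSup ((fun ω => S.oA ω t m.2 + S.γ ^ t * S.oc ω t (Fin.snoc m.2 u)) '' S.consistent t m))
  | (n+1), t, m => sInf (Set.range fun u : S.U =>
      sSup ((fun ω => Jopt n (t+1) (S.omem ω (t+1) (Fin.snoc m.2 u))) '' S.consistent t m))

/-- The conditional accrued distribution `r_t((c,s) | m_t, u_t)` of the pair
`(C_t, S_{t+1})` where `S_{t+1} = σ_{t+1}(M_{t+1})`:
`r_t(x|y) = sup_{a ∈ [0,a^max]}(a + 𝕀(x,a|y)) − sup_{a ∈ [0,a^max]}(a + 𝕀(a|y))` in `ℝ ∪ {−∞}`. -/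
def rcs {Ss : Type*} (σ : (t : ℕ) → S.Mem t → Ss) (t : ℕ) (c : ℝ) (s : Ss)
    (m : S.Mem t) (u : S.U) : EReal :=
  sSup ((fun a : ℝ => (a : EReal)) '' {a | a ∈ Set.Icc 0 S.amax ∧ ∃ ω ∈ S.consistent t m,
      S.oc ω t (Fin.snoc m.2 u) = c ∧ σ (t+1) (S.omem ω (t+1) (Fin.snoc m.2 u)) = s ∧
      S.oA ω t m.2 = a}) -
  sSup ((fun a : ℝ => (a : EReal)) '' {a | a ∈ Set.Icc 0 S.amax ∧ ∃ ω ∈ S.consistent t m,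
      S.oA ω t m.2 = a})

/-! ### Observable costs -/

/-- Memory space with observable costs: `M_t = (Y_{0:t}, C_{0:t-1}, U_{0:t-1})`. -/
abbrev MemO (t : ℕ) : Type := (Fin (t+1) → S.Y) × (Fin t → ℝ) × (Fin t → S.U)

/-- Strategies for the observable-cost problem. -/
abbrev StratO : Type := (t : ℕ) → S.MemO t → S.U

/-- The observable-cost memory realization at time `0` from an initial observation. -/
def memO0 (y : S.Y) : S.MemO 0 := (fun _ => y, Fin.elim0, Fin.elim0)

/-- Open-loop observable-cost memory generated by `ω` and actions `u_{0:t-1}`. -/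
def omemO (ω : ℕ → S.W) (t : ℕ) (υ : Fin t → S.U) : S.MemO t :=
  (fun i : Fin (t+1) =>
      S.oy ω i (fun j : Fin (i : ℕ) => υ ⟨j, by have := j.isLt; have := i.isLt; omega⟩),
   fun ℓ : Fin t =>
      S.oc ω ℓ (fun j : Fin ((ℓ : ℕ) + 1) => υ ⟨j, by have := j.isLt; have := ℓ.isLt; omega⟩),
   υ)

/-- Disturbances consistent with an observable-cost memory realization. -/
def consistentO (t : ℕ) (m : S.MemO t) : Set (ℕ → S.W) := {ω | S.omemO ω t m.2.2 = m}

/-- `[[A_t | m_t]]` for the observable-cost problem. -/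
def ArangeO (t : ℕ) (m : S.MemO t) : Set ℝ :=
  (fun ω => S.oA ω t m.2.2) '' S.consistentO t m

/-- Closed-loop observable-cost memory. -/
def memOfO (g : S.StratO) (ω : ℕ → S.W) : (t : ℕ) → S.MemO t
  | 0 => (fun _ => S.h0 (ω 0), Fin.elim0, Fin.elim0)
  | (t+1) =>
    let m := memOfO g ω t
    let us : Fin (t+1) → S.U := Fin.snoc m.2.2 (g t m)
    (Fin.snoc m.1 (S.h t (fun i : Fin (t+1) => ω i) us),
     Fin.snoc m.2.1 (S.d t (fun i : Fin (t+1) => ω i) us), us)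

/-- Closed-loop action for the observable-cost problem. -/
def actO (g : S.StratO) (ω : ℕ → S.W) (t : ℕ) : S.U := g t (S.memOfO g ω t)

/-- Closed-loop cost for the observable-cost problem. -/
def ccostO (g : S.StratO) (ω : ℕ → S.W) (t : ℕ) : ℝ :=
  S.d t (fun i : Fin (t+1) => ω i) (fun i : Fin (t+1) => S.actO g ω i)

/-- Closed-loop accrued cost for the observable-cost problem. -/
def cAO (g : S.StratO) (ω : ℕ → S.W) (t : ℕ) : ℝ :=
  ∑ ℓ ∈ Finset.range t, S.γ ^ ℓ * S.ccostO g ω ℓ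

/-- Closed-loop cost-to-go for the observable-cost problem. -/
def cCinfO (g : S.StratO) (ω : ℕ → S.W) (t : ℕ) : ℝ :=
  ∑' k : ℕ, S.γ ^ k * S.ccostO g ω (t + k)

/-- Strategy value function for the observable-cost problem. -/
def VO (g : S.StratO) (t : ℕ) (m : S.MemO t) : ℝ :=
  sSup ((fun ω => S.cAO g ω t + S.γ ^ t * S.cCinfO g ω t) '' {ω | S.memOfO g ω t = m})

/-- Optimal value function for the observable-cost problem. -/
def VoptO (t : ℕ) (m : S.MemO t) : ℝ :=
  sInf ((fun g => S.VO g t m) '' {g : S.StratO | ∃ ω, S.memOfO g ω t = m})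

/-- Optimal finite-horizon function for the observable-cost problem, fuel-indexed. -/
def JoptO : ℕ → (t : ℕ) → S.MemO t → ℝ
  | 0, t, m => sInf (Set.range fun u : S.U =>
      sSup ((fun ω => S.oA ω t m.2.2 + S.γ ^ t * S.oc ω t (Fin.snoc m.2.2 u)) ''
        S.consistentO t m))
  | (n+1), t, m => sInf (Set.range fun u : S.U =>
      sSup ((fun ω => JoptO n (t+1) (S.omemO ω (t+1) (Fin.snoc m.2.2 u))) '' S.consistentO t m))

/-- `[[C_t, S̄_{t+1} | m_t, u_t]]`: conditional range of the current cost and next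
(information-) state `S̄_{t+1} = σ̄_{t+1}(M_{t+1})` given the memory `m_t` and action `u_t`. -/
def CSrange {Sb : Type*} (σ : (t : ℕ) → S.MemO t → Sb) (t : ℕ) (m : S.MemO t) (u : S.U) :
    Set (ℝ × Sb) :=
  (fun ω => (S.oc ω t (Fin.snoc m.2.2 u), σ (t+1) (S.omemO ω (t+1) (Fin.snoc m.2.2 u)))) ''
    S.consistentO t m

/-- `[[C_t, Y_{t+1} | m_t, u_t]]`. -/
def CYrange (t : ℕ) (m : S.MemO t) (u : S.U) : Set (ℝ × S.Y) :=
  (fun ω => (S.oc ω t (Fin.snoc m.2.2 u), S.oy ω (t+1) (Fin.snoc m.2.2 u))) '' S.consistentO t m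

open Classical in
/-- Conditional indicator `𝕀((c_t, m_{t+1}) | m_t, u_t)` for the observable-cost problem. -/
def indObs (t : ℕ) (c : ℝ) (m' : S.MemO (t+1)) (m : S.MemO t) (u : S.U) : EReal :=
  if ∃ ω ∈ S.consistentO t m,
      S.oc ω t (Fin.snoc m.2.2 u) = c ∧ S.omemO ω (t+1) (Fin.snoc m.2.2 u) = m' then 0 else ⊥

/-- Conditional accrued distribution `r_t((c_t, m_{t+1}) | m_t, u_t)` for the
observable-cost problem. -/
def rObs (t : ℕ) (c : ℝ) (m' : S.MemO (t+1)) (m : S.MemO t) (u : S.U) : EReal :=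
  sSup ((fun a : ℝ => (a : EReal)) '' {a | a ∈ Set.Icc 0 S.amax ∧ ∃ ω ∈ S.consistentO t m,
      S.oc ω t (Fin.snoc m.2.2 u) = c ∧ S.omemO ω (t+1) (Fin.snoc m.2.2 u) = m' ∧
      S.oA ω t m.2.2 = a}) -
  sSup ((fun a : ℝ => (a : EReal)) '' {a | a ∈ Set.Icc 0 S.amax ∧ ∃ ω ∈ S.consistentO t m,
      S.oA ω t m.2.2 = a})

end Sys

/-!
Induction on `n`. For `n = 0` the estimate only says `C_t^∞ ∈ [c^min/(1-γ), c^max/(1-γ)]`.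
For the step, the optimal value satisfies the Bellman inequalities
`sup_{m_{t+1}} V_{t+1}(m_{t+1}) ≤ V_t^g(m_t)` (with `u = g_t(m_t)`) and
`V_t(m_t) ≤ sup_{m_{t+1}} V_{t+1}(m_{t+1})` for every action `u`, the latter by pasting
`ε`-optimal strategies for the successor memories. Inserting the induction hypothesis for
`V_{t+1}`, the supremum over disturbances is regrouped first by `m_{t+1}` and then by the pair
`(C_t, S_{t+1})`. On a fibre of the latter the accrued cost `A_t` has supremum
`sup [[A_t | m_t]] + ρ(C_t, S_{t+1} | σ_t(m_t), u)` by the information-state property, which turns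
the inner supremum into `γ^t` times the expression minimized in `𝒯Λ^n`.
-/

lemma csSup_image_le_csSup_image_add {X : Type*} {K : Set X} (hK : K.Nonempty) {f g : X → ℝ}
    {c : ℝ} (hg : BddAbove (g '' K)) (hfg : ∀ x ∈ K, f x ≤ g x + c) :
    sSup (f '' K) ≤ sSup (g '' K) + c :=
  csSup_le (hK.image f) <| by
    rintro _ ⟨x, hx, rfl⟩
    linarith [hfg x hx, le_csSup hg (mem_image_of_mem g hx)]

lemma csSup_image_le_csSup_image {X : Type*} {K : Set X} (hK : K.Nonempty) {f g : X → ℝ}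
    (hg : BddAbove (g '' K)) (hfg : ∀ x ∈ K, f x ≤ g x) : sSup (f '' K) ≤ sSup (g '' K) := by
  simpa using csSup_image_le_csSup_image_add hK hg (c := 0) (by simpa using hfg)

lemma csSup_image_mul_add {X : Type*} {K : Set X} (hK : K.Nonempty) {f : X → ℝ}
    (hf : BddAbove (f '' K)) {k : ℝ} (hk : 0 ≤ k) (d : ℝ) :
    sSup ((fun x => k * f x + d) '' K) = k * sSup (f '' K) + d := by
  have hmono : Monotone fun y : ℝ => k * y + d := fun _ _ hab => by dsimp only; gcongr
  rw [← image_image (fun y => k * y + d) f K]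
  exact (hmono.map_csSup_of_continuousAt (by fun_prop) (hK.image f) hf).symm

lemma csSup_image_add_const {X : Type*} {K : Set X} (hK : K.Nonempty) {f : X → ℝ}
    (hf : BddAbove (f '' K)) (d : ℝ) :
    sSup ((fun x => f x + d) '' K) = sSup (f '' K) + d := by
  simpa only [one_mul] using csSup_image_mul_add hK hf zero_le_one d

lemma csSup_image_eq_of_eq_csSup_fiber {X I : Type*} {K : Set X} (hK : K.Nonempty)
    {f e : X → ℝ} (π : X → I) (hf : BddAbove (f '' K))
    (he : ∀ x ∈ K, e x = sSup (f '' {y ∈ K | π y = π x})) :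
    sSup (e '' K) = sSup (f '' K) := by
  have hfiber : ∀ x ∈ K, f '' {y ∈ K | π y = π x} ⊆ f '' K :=
    fun _ _ => image_mono (sep_subset _ _)
  have he_le : ∀ x ∈ K, e x ≤ sSup (f '' K) := fun x hx => by
    rw [he x hx]
    exact csSup_le_csSup hf ⟨f x, x, ⟨hx, rfl⟩, rfl⟩ (hfiber x hx)
  refine le_antisymm (csSup_le (hK.image e) (forall_mem_image.2 he_le)) ?_
  refine csSup_le (hK.image f) (forall_mem_image.2 fun x hx => ?_)
  calc f x ≤ e x := he x hx ▸ le_csSup (hf.mono (hfiber x hx)) ⟨x, ⟨hx, rfl⟩, rfl⟩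
    _ ≤ sSup (e '' K) := le_csSup ⟨_, forall_mem_image.2 he_le⟩ (mem_image_of_mem e hx)

lemma EReal.coe_csSup {A : Set ℝ} (hne : A.Nonempty) (hb : BddAbove A) :
    ((sSup A : ℝ) : EReal) = sSup ((↑) '' A) :=
  EReal.coe_strictMono.monotone.map_csSup_of_continuousAt
    continuous_coe_real_ereal.continuousAt hne hb

section Discounted

variable {γ : ℝ} (hγ0 : 0 ≤ γ) (hγ1 : γ < 1)
include hγ0 hγ1

lemma sum_range_pow_mul_le_div {b : ℝ} (hb : 0 ≤ b) (t : ℕ) :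
    ∑ k ∈ Finset.range t, γ ^ k * b ≤ b / (1 - γ) :=
  calc ∑ k ∈ Finset.range t, γ ^ k * b = (∑ k ∈ Finset.range t, γ ^ k) * b :=
        (Finset.sum_mul ..).symm
    _ ≤ 1 / (1 - γ) * b := by
        gcongr
        simpa using geom_sum_Ico_le_of_lt_one (m := 0) (n := t) hγ0 hγ1
    _ = b / (1 - γ) := by ring

lemma summable_pow_mul_of_mem_Icc {x : ℕ → ℝ} {a b : ℝ} (ha : 0 ≤ a) (hx : ∀ k, x k ∈ Icc a b) :
    Summable fun k => γ ^ k * x k :=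
  .of_nonneg_of_le (fun k => mul_nonneg (pow_nonneg hγ0 k) (ha.trans (hx k).1))
    (fun k => mul_le_mul_of_nonneg_left (hx k).2 (pow_nonneg hγ0 k))
    ((summable_geometric_of_lt_one hγ0 hγ1).mul_right b)

lemma tsum_pow_mul_mem_Icc {x : ℕ → ℝ} {a b : ℝ} (ha : 0 ≤ a) (hx : ∀ k, x k ∈ Icc a b) :
    ∑' k, γ ^ k * x k ∈ Icc (a / (1 - γ)) (b / (1 - γ)) := by
  have hgeom (c : ℝ) : ∑' k, γ ^ k * c = c / (1 - γ) := by
    rw [tsum_mul_right, tsum_geometric_of_lt_one hγ0 hγ1, div_eq_mul_inv, mul_comm]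
  have hsum := summable_pow_mul_of_mem_Icc hγ0 hγ1 ha hx
  have hgeom_summable (c : ℝ) := (summable_geometric_of_lt_one hγ0 hγ1).mul_right c
  refine ⟨hgeom a ▸ ?_, hgeom b ▸ ?_⟩
  · exact Summable.tsum_le_tsum (fun k => mul_le_mul_of_nonneg_left (hx k).1 (pow_nonneg hγ0 k))
      (hgeom_summable a) hsum
  · exact Summable.tsum_le_tsum (fun k => mul_le_mul_of_nonneg_left (hx k).2 (pow_nonneg hγ0 k))
      hsum (hgeom_summable b)

end Discounted

lemma Fin.snoc_restrict_nat {α : Type*} (f : ℕ → α) (n : ℕ) :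
    (fun i : Fin (n + 1) => f i) = Fin.snoc (fun i : Fin n => f i) (f n) := by
  funext i
  refine Fin.lastCases ?_ (fun j => ?_) i <;> simp

namespace Sys

section

variable (S : Sys)

lemma one_sub_γ_pos : 0 < 1 - S.γ := sub_pos.2 S.hγ1

lemma cmax_nonneg : 0 ≤ S.cmax := by
  obtain ⟨w⟩ := S.hW
  obtain ⟨u⟩ := S.hU
  obtain ⟨hmin, hmax⟩ := S.hcost 0 (fun _ => w) (fun _ => u)
  linarith [S.hcmin]

lemma amax_nonneg : 0 ≤ S.amax := div_nonneg S.cmax_nonneg S.one_sub_γ_pos.le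

lemma oc_nonneg (ω : ℕ → S.W) (t : ℕ) (υ : Fin (t + 1) → S.U) : 0 ≤ S.oc ω t υ :=
  S.hcmin.trans (S.hcost ..).1

lemma oA_mem_Icc (ω : ℕ → S.W) (t : ℕ) (υ : Fin t → S.U) : S.oA ω t υ ∈ Icc 0 S.amax := by
  refine ⟨Finset.sum_nonneg fun ℓ _ => mul_nonneg (pow_nonneg S.hγ0.le _) (S.oc_nonneg ..), ?_⟩
  calc S.oA ω t υ ≤ ∑ ℓ : Fin t, S.γ ^ (ℓ : ℕ) * S.cmax :=
        Finset.sum_le_sum fun ℓ _ =>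
          mul_le_mul_of_nonneg_left (S.hcost ..).2 (pow_nonneg S.hγ0.le _)
    _ ≤ S.amax := by
        rw [Fin.sum_univ_eq_sum_range (fun ℓ => S.γ ^ ℓ * S.cmax)]
        exact sum_range_pow_mul_le_div S.hγ0.le S.hγ1 S.cmax_nonneg t

end

section

variable (S : Sys)

def pre {s t : ℕ} (h : s ≤ t) (M : S.Mem t) : S.Mem s :=
  (fun i => M.1 ⟨i, by omega⟩, fun i => M.2 ⟨i, by omega⟩)

def nextMem (t : ℕ) (m : S.Mem t) (u : S.U) (ω : ℕ → S.W) : S.Mem (t + 1) :=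
  S.omem ω (t + 1) (Fin.snoc m.2 u)

def Follows (g : S.Strat) {t : ℕ} (m : S.Mem t) : Prop :=
  ∀ s (hs : s < t), g s (S.pre hs.le m) = m.2 ⟨s, hs⟩

variable {S}

lemma pre_omem {s t : ℕ} (h : s ≤ t) (ω : ℕ → S.W) (υ : Fin t → S.U) :
    S.pre h (S.omem ω t υ) = S.omem ω s (fun i => υ ⟨i, by omega⟩) := rfl

lemma omem_snoc (ω : ℕ → S.W) (s : ℕ) (υ : Fin s → S.U) (a : S.U) :
    S.omem ω (s + 1) (Fin.snoc υ a) =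
      (Fin.snoc (S.omem ω s υ).1 (S.h s (fun i => ω i) (Fin.snoc υ a)), Fin.snoc υ a) := by
  refine Prod.ext (funext fun i => Fin.lastCases ?_ (fun j => ?_) i) rfl
  · simp only [omem, Fin.snoc_last, Fin.val_last]
    rfl
  · simp only [omem, Fin.snoc_castSucc, Fin.val_castSucc]
    congr 1
    funext k
    exact Fin.snoc_castSucc (α := fun _ => S.U) a υ ⟨k, by omega⟩

lemma memOf_eq_omem (g : S.Strat) (ω : ℕ → S.W) (t : ℕ) :
    S.memOf g ω t = S.omem ω t (fun ℓ : Fin t => S.act g ω ℓ) := by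
  induction t with
  | zero =>
    refine Prod.ext (funext fun i => ?_) (funext fun i => i.elim0)
    rw [Fin.fin_one_eq_zero i]
    rfl
  | succ s ih =>
    have h2 : (S.memOf g ω s).2 = fun ℓ : Fin s => S.act g ω ℓ := congrArg Prod.snd ih
    rw [Fin.snoc_restrict_nat (S.act g ω), omem_snoc, ← ih]
    simp only [memOf, h2]
    rfl

lemma pre_memOf (g : S.Strat) (ω : ℕ → S.W) {s t : ℕ} (h : s ≤ t) :
    S.pre h (S.memOf g ω t) = S.memOf g ω s := by
  rw [memOf_eq_omem, memOf_eq_omem, pre_omem]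

lemma mem_consistent_of_memOf_eq {g : S.Strat} {ω : ℕ → S.W} {t : ℕ} {m : S.Mem t}
    (h : S.memOf g ω t = m) : ω ∈ S.consistent t m := by
  subst h
  show S.omem ω t (S.memOf g ω t).2 = _
  rw [memOf_eq_omem]
  rfl

lemma follows_of_memOf_eq {g : S.Strat} {ω : ℕ → S.W} {t : ℕ} {m : S.Mem t}
    (h : S.memOf g ω t = m) : S.Follows g m := by
  intro s hs
  subst h
  rw [pre_memOf]
  conv_rhs => rw [memOf_eq_omem]
  rfl

lemma memOf_eq_pre_of_follows {g : S.Strat} {t : ℕ} {m : S.Mem t} (hg : S.Follows g m)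
    {ω : ℕ → S.W} (hω : ω ∈ S.consistent t m) (s : ℕ) (hs : s ≤ t) :
    S.memOf g ω s = S.pre hs m := by
  induction s with
  | zero =>
    rw [memOf_eq_omem, ← hω]
    refine Prod.ext (funext fun i => ?_) (funext fun i => i.elim0)
    rw [Fin.fin_one_eq_zero i]
    rfl
  | succ s ih =>
    have hact : S.act g ω s = m.2 ⟨s, hs⟩ := by
      rw [act, ih (by omega), hg]
    have hprev := congrArg Prod.snd ((memOf_eq_omem g ω s).symm.trans (ih (by omega)))
    rw [memOf_eq_omem, ← hω, pre_omem]
    congr 1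
    funext i
    refine Fin.lastCases hact (fun j => ?_) i
    exact congrFun hprev j

lemma memOf_eq_of_follows {g : S.Strat} {t : ℕ} {m : S.Mem t} (hg : S.Follows g m)
    {ω : ℕ → S.W} (hω : ω ∈ S.consistent t m) : S.memOf g ω t = m :=
  S.memOf_eq_pre_of_follows hg hω t le_rfl

lemma setOf_memOf_eq {g : S.Strat} {t : ℕ} {m : S.Mem t} (hg : S.Follows g m) :
    {ω | S.memOf g ω t = m} = S.consistent t m :=
  Set.ext fun _ => ⟨mem_consistent_of_memOf_eq, memOf_eq_of_follows hg⟩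

lemma setOf_exists_memOf_eq {t : ℕ} {m : S.Mem t} (hm : (S.consistent t m).Nonempty) :
    {g : S.Strat | ∃ ω, S.memOf g ω t = m} = {g | S.Follows g m} :=
  Set.ext fun _ => ⟨fun ⟨_, h⟩ => follows_of_memOf_eq h,
    fun hg => ⟨hm.some, memOf_eq_of_follows hg hm.some_mem⟩⟩

lemma exists_follows {t : ℕ} (m : S.Mem t) : ∃ g : S.Strat, S.Follows g m := by
  exact ⟨fun s _ => if h : s < t then m.2 ⟨s, h⟩ else Classical.arbitrary S.U,
    fun s hs => dif_pos hs⟩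

lemma cA_eq_oA {g : S.Strat} {ω : ℕ → S.W} {t : ℕ} {m : S.Mem t} (h : S.memOf g ω t = m) :
    S.cA g ω t = S.oA ω t m.2 := by
  subst h
  rw [cA, oA, ← Fin.sum_univ_eq_sum_range, memOf_eq_omem]
  rfl

lemma memOf_succ {g : S.Strat} {t : ℕ} {m : S.Mem t} (hg : S.Follows g m) {ω : ℕ → S.W}
    (hω : ω ∈ S.consistent t m) : S.memOf g ω (t + 1) = S.nextMem t m (g t m) ω := by
  have h := memOf_eq_of_follows hg hω
  rw [nextMem, omem_snoc, hω]
  simp only [memOf, h]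

lemma oA_snoc (ω : ℕ → S.W) (t : ℕ) (υ : Fin t → S.U) (u : S.U) :
    S.oA ω (t + 1) (Fin.snoc υ u) = S.oA ω t υ + S.γ ^ t * S.oc ω t (Fin.snoc υ u) := by
  rw [oA, Fin.sum_univ_castSucc]
  congr 1
  refine Finset.sum_congr rfl fun ℓ _ => ?_
  congr 2
  funext j
  have hj : (j : ℕ) < t := by have := j.isLt; simp only [Fin.val_castSucc] at this; omega
  exact Fin.snoc_castSucc (α := fun _ => S.U) u υ ⟨j, hj⟩

lemma pre_nextMem (t : ℕ) (m : S.Mem t) (u : S.U) (ω : ℕ → S.W) :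
    S.pre t.le_succ (S.nextMem t m u ω) = S.omem ω t m.2 := by
  rw [nextMem, pre_omem]
  congr 1
  funext i
  exact Fin.snoc_castSucc (α := fun _ => S.U) u m.2 i

lemma mem_consistent_nextMem (t : ℕ) (m : S.Mem t) (u : S.U) (ω : ℕ → S.W) :
    ω ∈ S.consistent (t + 1) (S.nextMem t m u ω) := rfl

lemma mem_consistent_of_nextMem_eq {t : ℕ} {m : S.Mem t} {u : S.U} {ω y : ℕ → S.W}
    (hω : ω ∈ S.consistent t m) (h : S.nextMem t m u y = S.nextMem t m u ω) :
    y ∈ S.consistent t m := by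
  have := congrArg (S.pre t.le_succ) h
  rwa [pre_nextMem, pre_nextMem, hω] at this

lemma consistent_nextMem {t : ℕ} {m : S.Mem t} {u : S.U} {ω : ℕ → S.W}
    (hω : ω ∈ S.consistent t m) :
    S.consistent (t + 1) (S.nextMem t m u ω) =
      {y ∈ S.consistent t m | S.nextMem t m u y = S.nextMem t m u ω} :=
  Set.ext fun _ => ⟨fun h => ⟨mem_consistent_of_nextMem_eq hω h, h⟩, fun h => h.2⟩

end

section

variable {S : Sys}

section Agree

variable {g₁ g₂ : S.Strat} {t : ℕ} {m : S.Mem t} (h₁ : S.Follows g₁ m) (h₂ : S.Follows g₂ m)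
  (hag : ∀ s (M : S.Mem s) (h : t ≤ s), S.pre h M = m → g₁ s M = g₂ s M)
  {ω : ℕ → S.W} (hω : ω ∈ S.consistent t m)
include h₁ h₂ hag hω

lemma apply_memOf_eq_of_agree (s : ℕ) : g₁ s (S.memOf g₁ ω s) = g₂ s (S.memOf g₁ ω s) := by
  rcases lt_or_ge s t with hs | hs
  · rw [memOf_eq_pre_of_follows h₁ hω s hs.le, h₁ s hs, h₂ s hs]
  · exact hag s _ hs (by rw [pre_memOf, memOf_eq_of_follows h₁ hω])

lemma memOf_eq_of_agree (s : ℕ) : S.memOf g₁ ω s = S.memOf g₂ ω s := by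
  induction s with
  | zero => rfl
  | succ s ih =>
    have hg := apply_memOf_eq_of_agree h₁ h₂ hag hω s
    rw [ih] at hg
    simp only [memOf, ih, hg]

lemma act_eq_of_agree (s : ℕ) : S.act g₁ ω s = S.act g₂ ω s := by
  rw [act, act, apply_memOf_eq_of_agree h₁ h₂ hag hω, memOf_eq_of_agree h₁ h₂ hag hω]

end Agree

lemma V_congr {g₁ g₂ : S.Strat} {t : ℕ} {m : S.Mem t} (h₁ : S.Follows g₁ m)
    (h₂ : S.Follows g₂ m) (hag : ∀ s (M : S.Mem s) (h : t ≤ s), S.pre h M = m → g₁ s M = g₂ s M) :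
    S.V g₁ t m = S.V g₂ t m := by
  rw [V, V, setOf_memOf_eq h₁, setOf_memOf_eq h₂]
  refine congrArg sSup (image_congr fun ω hω => ?_)
  have hc : S.ccost g₁ ω = S.ccost g₂ ω := funext fun s => by
    simp only [ccost, act_eq_of_agree h₁ h₂ hag hω]
  simp only [cA, cCinf, hc]

variable (S)

lemma cA_mem_Icc (g : S.Strat) (ω : ℕ → S.W) (t : ℕ) : S.cA g ω t ∈ Icc 0 S.amax :=
  cA_eq_oA rfl ▸ S.oA_mem_Icc ..

lemma summable_ccost (g : S.Strat) (ω : ℕ → S.W) (t : ℕ) :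
    Summable fun k => S.γ ^ k * S.ccost g ω (t + k) :=
  summable_pow_mul_of_mem_Icc S.hγ0.le S.hγ1 S.hcmin fun _ => S.hcost ..

lemma cCinf_mem_Icc (g : S.Strat) (ω : ℕ → S.W) (t : ℕ) :
    S.cCinf g ω t ∈ Icc (S.cmin / (1 - S.γ)) S.amax :=
  tsum_pow_mul_mem_Icc S.hγ0.le S.hγ1 S.hcmin fun _ => S.hcost ..

lemma cCinf_succ (g : S.Strat) (ω : ℕ → S.W) (t : ℕ) :
    S.cCinf g ω t = S.ccost g ω t + S.γ * S.cCinf g ω (t + 1) := by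
  rw [cCinf, (S.summable_ccost g ω t).tsum_eq_zero_add, cCinf, ← tsum_mul_left]
  congr 1
  · simp
  · refine tsum_congr fun k => ?_
    rw [pow_succ, show t + (k + 1) = t + 1 + k by omega]
    ring

lemma cA_add_cCinf_succ (g : S.Strat) (ω : ℕ → S.W) (t : ℕ) :
    S.cA g ω (t + 1) + S.γ ^ (t + 1) * S.cCinf g ω (t + 1) =
      S.cA g ω t + S.γ ^ t * S.cCinf g ω t := by
  rw [cA, Finset.sum_range_succ, ← cA, S.cCinf_succ g ω t, pow_succ]
  ring

end

section

variable {S : Sys} {t : ℕ} {m : S.Mem t}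

lemma bddAbove_Arange (t : ℕ) (m : S.Mem t) : BddAbove (S.Arange t m) :=
  ⟨S.amax, forall_mem_image.2 fun _ _ => (S.oA_mem_Icc ..).2⟩

lemma cA_add_cCinf_le (g : S.Strat) (ω : ℕ → S.W) (t : ℕ) :
    S.cA g ω t + S.γ ^ t * S.cCinf g ω t ≤ S.amax + S.γ ^ t * S.amax :=
  add_le_add (S.cA_mem_Icc ..).2
    (mul_le_mul_of_nonneg_left (S.cCinf_mem_Icc ..).2 (pow_nonneg S.hγ0.le t))

lemma V_nonneg (g : S.Strat) (t : ℕ) (m : S.Mem t) : 0 ≤ S.V g t m :=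
  Real.sSup_nonneg <| forall_mem_image.2 fun ω _ =>
    add_nonneg (S.cA_mem_Icc g ω t).1 <| mul_nonneg (pow_nonneg S.hγ0.le t) <|
      (div_nonneg S.hcmin S.one_sub_γ_pos.le).trans (S.cCinf_mem_Icc g ω t).1

lemma V_le (g : S.Strat) (t : ℕ) (m : S.Mem t) : S.V g t m ≤ S.amax + S.γ ^ t * S.amax :=
  Real.sSup_le (forall_mem_image.2 fun ω _ => S.cA_add_cCinf_le g ω t) <|
    add_nonneg S.amax_nonneg (mul_nonneg (pow_nonneg S.hγ0.le t) S.amax_nonneg)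

lemma V_eq_sSup_oA {g : S.Strat} (hg : S.Follows g m) :
    S.V g t m = sSup ((fun ω => S.oA ω t m.2 + S.γ ^ t * S.cCinf g ω t) '' S.consistent t m) := by
  rw [V, setOf_memOf_eq hg]
  exact congrArg sSup (image_congr fun ω hω => by rw [cA_eq_oA (memOf_eq_of_follows hg hω)])

lemma V_le_sSup_Arange_add {g : S.Strat} (hg : S.Follows g m) (hm : (S.consistent t m).Nonempty) :
    S.V g t m ≤ sSup (S.Arange t m) + S.γ ^ t * S.amax := by
  rw [V_eq_sSup_oA hg]
  refine csSup_image_le_csSup_image_add hm (bddAbove_Arange t m) fun ω _ => ?_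
  have := mul_le_mul_of_nonneg_left (S.cCinf_mem_Icc g ω t).2 (pow_nonneg S.hγ0.le t)
  linarith

lemma sSup_Arange_add_le_V {g : S.Strat} (hg : S.Follows g m) (hm : (S.consistent t m).Nonempty) :
    sSup (S.Arange t m) + S.γ ^ t * (S.cmin / (1 - S.γ)) ≤ S.V g t m := by
  have hbdd : BddAbove ((fun ω => S.oA ω t m.2 + S.γ ^ t * S.cCinf g ω t) '' S.consistent t m) :=
    ⟨_, forall_mem_image.2 fun ω hω =>
      cA_eq_oA (memOf_eq_of_follows hg hω) ▸ S.cA_add_cCinf_le g ω t⟩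
  have := csSup_image_le_csSup_image_add hm hbdd (c := -(S.γ ^ t * (S.cmin / (1 - S.γ))))
    fun ω _ => by
      rw [← sub_eq_add_neg, le_sub_iff_add_le]
      exact add_le_add_right (mul_le_mul_of_nonneg_left (S.cCinf_mem_Icc g ω t).1
        (pow_nonneg S.hγ0.le t)) _
  rw [V_eq_sSup_oA hg]
  exact le_sub_iff_add_le.1 this

lemma Vopt_eq (hm : (S.consistent t m).Nonempty) :
    S.Vopt t m = sInf ((fun g => S.V g t m) '' {g | S.Follows g m}) := by
  rw [Vopt, setOf_exists_memOf_eq hm]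

lemma Vopt_le_V (hm : (S.consistent t m).Nonempty) {g : S.Strat} (hg : S.Follows g m) :
    S.Vopt t m ≤ S.V g t m := by
  rw [Vopt_eq hm]
  exact csInf_le ⟨0, forall_mem_image.2 fun g _ => S.V_nonneg g t m⟩ ⟨g, hg, rfl⟩

lemma le_Vopt (hm : (S.consistent t m).Nonempty) {b : ℝ}
    (h : ∀ g, S.Follows g m → b ≤ S.V g t m) : b ≤ S.Vopt t m := by
  rw [Vopt_eq hm]
  obtain ⟨g, hg⟩ := exists_follows m
  exact le_csInf ⟨_, g, hg, rfl⟩ (forall_mem_image.2 h)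

lemma exists_follows_V_lt (hm : (S.consistent t m).Nonempty) {ε : ℝ} (hε : 0 < ε) :
    ∃ g, S.Follows g m ∧ S.V g t m < S.Vopt t m + ε := by
  rw [Vopt_eq hm]
  obtain ⟨g₀, hg₀⟩ := exists_follows m
  obtain ⟨_, ⟨g, hg, rfl⟩, hlt⟩ :=
    exists_lt_of_csInf_lt (s := (fun g => S.V g t m) '' {g | S.Follows g m}) ⟨_, g₀, hg₀, rfl⟩
      (lt_add_of_pos_right _ hε)
  exact ⟨g, hg, hlt⟩

lemma sSup_Arange_add_le_Vopt (hm : (S.consistent t m).Nonempty) :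
    sSup (S.Arange t m) + S.γ ^ t * (S.cmin / (1 - S.γ)) ≤ S.Vopt t m :=
  le_Vopt hm fun _ hg => sSup_Arange_add_le_V hg hm

lemma Vopt_le_sSup_Arange_add (hm : (S.consistent t m).Nonempty) :
    S.Vopt t m ≤ sSup (S.Arange t m) + S.γ ^ t * S.amax :=
  let ⟨_, hg⟩ := exists_follows m
  (Vopt_le_V hm hg).trans (V_le_sSup_Arange_add hg hm)

lemma sSup_Arange_mem_Icc (hm : (S.consistent t m).Nonempty) :
    sSup (S.Arange t m) ∈ Icc 0 S.amax :=
  ⟨Real.sSup_nonneg (forall_mem_image.2 fun _ _ => (S.oA_mem_Icc ..).1),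
    csSup_le (hm.image _) (forall_mem_image.2 fun _ _ => (S.oA_mem_Icc ..).2)⟩

lemma Vopt_nonneg (t : ℕ) (m : S.Mem t) : 0 ≤ S.Vopt t m :=
  Real.sInf_nonneg (forall_mem_image.2 fun g _ => S.V_nonneg g t m)

lemma Vopt_le_amax_add (hm : (S.consistent t m).Nonempty) :
    S.Vopt t m ≤ S.amax + S.γ ^ t * S.amax :=
  let ⟨g, hg⟩ := exists_follows m
  (Vopt_le_V hm hg).trans (S.V_le g t m)

lemma bddAbove_Vopt_nextMem (t : ℕ) (m : S.Mem t) (u : S.U) :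
    BddAbove ((fun ω => S.Vopt (t + 1) (S.nextMem t m u ω)) '' S.consistent t m) :=
  ⟨S.amax + S.γ ^ (t + 1) * S.amax,
    forall_mem_image.2 fun ω _ => Vopt_le_amax_add ⟨ω, mem_consistent_nextMem ..⟩⟩

lemma V_eq_sSup_V_nextMem {g : S.Strat} (hg : S.Follows g m) (hm : (S.consistent t m).Nonempty) :
    S.V g t m = sSup ((fun ω => S.V g (t + 1) (S.nextMem t m (g t m) ω)) '' S.consistent t m) := by
  have hV : S.V g t m = sSup ((fun ω => S.cA g ω (t + 1) + S.γ ^ (t + 1) * S.cCinf g ω (t + 1)) ''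
      S.consistent t m) := by
    simp only [V, setOf_memOf_eq hg, cA_add_cCinf_succ]
  rw [hV]
  refine (csSup_image_eq_of_eq_csSup_fiber hm (S.nextMem t m (g t m))
    ⟨_, forall_mem_image.2 fun ω _ => S.cA_add_cCinf_le g ω (t + 1)⟩ fun ω hω => ?_).symm
  rw [V, setOf_memOf_eq (follows_of_memOf_eq (memOf_succ hg hω)), consistent_nextMem hω]

lemma sSup_Vopt_nextMem_le_V {g : S.Strat} (hg : S.Follows g m)
    (hm : (S.consistent t m).Nonempty) :
    sSup ((fun ω => S.Vopt (t + 1) (S.nextMem t m (g t m) ω)) '' S.consistent t m) ≤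
      S.V g t m := by
  rw [V_eq_sSup_V_nextMem hg hm]
  exact csSup_image_le_csSup_image hm ⟨_, forall_mem_image.2 fun _ _ => S.V_le ..⟩
    fun ω hω => Vopt_le_V ⟨ω, mem_consistent_nextMem ..⟩ (follows_of_memOf_eq (memOf_succ hg hω))

end

section

def paste {S : Sys} (t : ℕ) (m : S.Mem t) (u : S.U) (G : S.Mem (t + 1) → S.Strat) : S.Strat :=
  fun s M => if h : t + 1 ≤ s then G (S.pre h M) s M else if h' : s < t then m.2 ⟨s, h'⟩ else u

variable {S : Sys} {t : ℕ} {m : S.Mem t} {u : S.U} {G : S.Mem (t + 1) → S.Strat}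

lemma follows_paste : S.Follows (S.paste t m u G) m := fun s hs => by
  simp [paste, hs, show ¬ t + 1 ≤ s by omega]

lemma paste_self : S.paste t m u G t m = u := by
  simp [paste]

lemma V_paste {ω : ℕ → S.W} (hω : ω ∈ S.consistent t m)
    (hG : S.Follows (G (S.nextMem t m u ω)) (S.nextMem t m u ω)) :
    S.V (S.paste t m u G) (t + 1) (S.nextMem t m u ω) =
      S.V (G (S.nextMem t m u ω)) (t + 1) (S.nextMem t m u ω) := by
  have hfol : S.Follows (S.paste t m u G) (S.nextMem t m u ω) :=
    follows_of_memOf_eq (paste_self (G := G) ▸ memOf_succ follows_paste hω)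
  exact V_congr hfol hG fun s M h hM => by simp [paste, h, hM]

lemma Vopt_le_sSup_Vopt_nextMem (hm : (S.consistent t m).Nonempty) (u : S.U) :
    S.Vopt t m ≤ sSup ((fun ω => S.Vopt (t + 1) (S.nextMem t m u ω)) '' S.consistent t m) := by
  refine le_of_forall_pos_le_add fun ε hε => ?_
  have hsel (M : S.Mem (t + 1)) : ∃ g, (S.consistent (t + 1) M).Nonempty →
      S.Follows g M ∧ S.V g (t + 1) M < S.Vopt (t + 1) M + ε := by
    by_cases hM : (S.consistent (t + 1) M).Nonempty
    · obtain ⟨g, hg⟩ := exists_follows_V_lt hM hε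
      exact ⟨g, fun _ => hg⟩
    · exact ⟨Classical.arbitrary _, fun h => absurd h hM⟩
  choose G hG using hsel
  calc S.Vopt t m ≤ S.V (S.paste t m u G) t m := Vopt_le_V hm follows_paste
    _ = sSup ((fun ω => S.V (S.paste t m u G) (t + 1) (S.nextMem t m u ω)) ''
          S.consistent t m) := by
        rw [V_eq_sSup_V_nextMem follows_paste hm, paste_self]
    _ ≤ _ := csSup_image_le_csSup_image_add hm (bddAbove_Vopt_nextMem t m u) fun ω hω => by
        have hne := hG _ ⟨ω, mem_consistent_nextMem t m u ω⟩
        rw [V_paste hω hne.1]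
        exact hne.2.le

end

section

variable {S : Sys} {Ss : Type} (σ : (t : ℕ) → S.Mem t → Ss) {t : ℕ} {m : S.Mem t} {u : S.U}

variable (S) in
/-- The pair `(C_t, S_{t+1})`. -/
def costNext (t : ℕ) (m : S.Mem t) (u : S.U) (ω : ℕ → S.W) : ℝ × Ss :=
  (S.oc ω t (Fin.snoc m.2 u), σ (t + 1) (S.nextMem t m u ω))

lemma rcs_eq (c : ℝ) (s : Ss) :
    S.rcs σ t c s m u =
      sSup ((↑) '' ((fun ω => S.oA ω t m.2) ''
          {ω ∈ S.consistent t m | S.costNext σ t m u ω = (c, s)}))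
        - sSup ((↑) '' S.Arange t m) := by
  have hIcc (ω : ℕ → S.W) := S.oA_mem_Icc ω t m.2
  rw [rcs]
  congr 3 <;> ext a
  · constructor
    · rintro ⟨-, ω, hω, hc, hs, rfl⟩
      exact ⟨ω, ⟨hω, Prod.ext hc hs⟩, rfl⟩
    · rintro ⟨ω, ⟨hω, h⟩, rfl⟩
      exact ⟨hIcc ω, ω, hω, congrArg Prod.fst h, congrArg Prod.snd h, rfl⟩
  · exact ⟨fun ⟨_, h⟩ => h, fun ⟨ω, hω, ha⟩ => ⟨ha ▸ hIcc ω, ω, hω, ha⟩⟩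

lemma rcs_eq_coe (hm : (S.consistent t m).Nonempty) {c : ℝ} {s : Ss}
    (hfib : {ω ∈ S.consistent t m | S.costNext σ t m u ω = (c, s)}.Nonempty) :
    S.rcs σ t c s m u = ↑(sSup ((fun ω => S.oA ω t m.2) ''
      {ω ∈ S.consistent t m | S.costNext σ t m u ω = (c, s)}) - sSup (S.Arange t m)) := by
  rw [rcs_eq,
    ← EReal.coe_csSup (hfib.image _) ((bddAbove_Arange t m).mono (image_mono (sep_subset _ _))),
    ← EReal.coe_csSup (A := S.Arange t m) (hm.image _) (bddAbove_Arange t m), EReal.coe_sub]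

lemma rcs_eq_bot {c : ℝ} {s : Ss}
    (hfib : {ω ∈ S.consistent t m | S.costNext σ t m u ω = (c, s)} = ∅) :
    S.rcs σ t c s m u = ⊥ := by
  rw [rcs_eq, hfib, image_empty, image_empty, sSup_empty, EReal.bot_sub]

variable {ρ : ℝ → Ss → Ss → S.U → EReal}
  (hinfo : ∀ (t : ℕ) (m : S.Mem t) (u : S.U) (c : ℝ) (s : Ss),
      S.rcs σ t c s m u = ρ c s (σ t m) u)
include hinfo

lemma image_costNext_eq (hm : (S.consistent t m).Nonempty) :
    S.costNext σ t m u '' S.consistent t m = {p | ρ p.1 p.2 (σ t m) u ≠ ⊥} := by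
  ext ⟨c, s⟩
  constructor
  · rintro ⟨ω, hω, hp⟩
    show ρ c s (σ t m) u ≠ ⊥
    rw [← hinfo, rcs_eq_coe σ hm ⟨ω, hω, hp⟩]
    exact EReal.coe_ne_bot _
  · intro hp
    by_contra hnot
    refine hp (hinfo t m u c s ▸ rcs_eq_bot σ (eq_empty_of_forall_notMem fun ω hω => ?_))
    exact hnot ⟨ω, hω⟩

end

section

variable {S : Sys} {t : ℕ} {m : S.Mem t} {u : S.U}

lemma sSup_sSup_Arange_nextMem_add (hm : (S.consistent t m).Nonempty) (f : S.Mem (t + 1) → ℝ)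
    (hf : BddAbove ((fun ω => f (S.nextMem t m u ω)) '' S.consistent t m)) :
    sSup ((fun ω => sSup (S.Arange (t + 1) (S.nextMem t m u ω)) + f (S.nextMem t m u ω)) ''
        S.consistent t m) =
      sSup ((fun ω => S.oA ω (t + 1) (Fin.snoc m.2 u) + f (S.nextMem t m u ω)) ''
        S.consistent t m) := by
  obtain ⟨B, hB⟩ := hf
  refine csSup_image_eq_of_eq_csSup_fiber hm (S.nextMem t m u)
    ⟨S.amax + B, forall_mem_image.2 fun ω hω => add_le_add (S.oA_mem_Icc ..).2 (hB ⟨ω, hω, rfl⟩)⟩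
    fun ω hω => ?_
  have himg : (fun y => S.oA y (t + 1) (Fin.snoc m.2 u) + f (S.nextMem t m u y)) ''
        S.consistent (t + 1) (S.nextMem t m u ω) =
      (fun y => S.oA y (t + 1) (S.nextMem t m u ω).2 + f (S.nextMem t m u ω)) ''
        S.consistent (t + 1) (S.nextMem t m u ω) :=
    image_congr fun y (hy : S.nextMem t m u y = S.nextMem t m u ω) => by rw [hy]; rfl
  rw [← consistent_nextMem hω, himg,
    csSup_image_add_const ⟨ω, mem_consistent_nextMem t m u ω⟩ (bddAbove_Arange _ _)]
  rfl

variable {Ss : Type} (σ : (t : ℕ) → S.Mem t → Ss) {ρ : ℝ → Ss → Ss → S.U → EReal}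
  (hinfo : ∀ (t : ℕ) (m : S.Mem t) (u : S.U) (c : ℝ) (s : Ss),
      S.rcs σ t c s m u = ρ c s (σ t m) u)
include hinfo

lemma toReal_rho_costNext (hm : (S.consistent t m).Nonempty) {ω : ℕ → S.W}
    (hω : ω ∈ S.consistent t m) :
    (ρ (S.costNext σ t m u ω).1 (S.costNext σ t m u ω).2 (σ t m) u).toReal =
      sSup ((fun y => S.oA y t m.2) ''
        {y ∈ S.consistent t m | S.costNext σ t m u y = S.costNext σ t m u ω})
      - sSup (S.Arange t m) := by
  rw [← hinfo, rcs_eq_coe σ hm (c := (S.costNext σ t m u ω).1) (s := (S.costNext σ t m u ω).2)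
    ⟨ω, hω, rfl⟩, EReal.toReal_coe]

lemma bddAbove_toReal_add_image (hm : (S.consistent t m).Nonempty) {ψ : ℝ × Ss → ℝ}
    (hψ : BddAbove ((fun ω => ψ (S.costNext σ t m u ω)) '' S.consistent t m)) :
    BddAbove ((fun p => (ρ p.1 p.2 (σ t m) u).toReal + ψ p) '' {p | ρ p.1 p.2 (σ t m) u ≠ ⊥}) := by
  obtain ⟨B, hB⟩ := hψ
  refine ⟨B, ?_⟩
  rw [← image_costNext_eq σ hinfo hm, image_image]
  refine forall_mem_image.2 fun ω hω => ?_
  have hle : sSup ((fun y => S.oA y t m.2) ''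
      {y ∈ S.consistent t m | S.costNext σ t m u y = S.costNext σ t m u ω}) ≤ sSup (S.Arange t m) :=
    csSup_le_csSup (bddAbove_Arange t m) ⟨_, ⟨ω, ⟨hω, rfl⟩, rfl⟩⟩ (image_mono (sep_subset _ _))
  have := hB ⟨ω, hω, rfl⟩
  dsimp only at this ⊢
  rw [toReal_rho_costNext σ hinfo hm hω]
  linarith

/-- Group `ω` by `(C_t, S_{t+1})`: by the information-state property, on each fibre `A_t` has
supremum `sup [[A_t | m_t]] + ρ(C_t, S_{t+1} | σ_t(m_t), u)`. -/
lemma sSup_oA_add_eq (hm : (S.consistent t m).Nonempty) (ψ : ℝ × Ss → ℝ)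
    (hψ : BddAbove ((fun ω => ψ (S.costNext σ t m u ω)) '' S.consistent t m)) :
    sSup ((fun ω => S.oA ω t m.2 + ψ (S.costNext σ t m u ω)) '' S.consistent t m) =
      sSup ((fun p => (ρ p.1 p.2 (σ t m) u).toReal + ψ p) '' {p | ρ p.1 p.2 (σ t m) u ≠ ⊥})
        + sSup (S.Arange t m) := by
  obtain ⟨B, hB⟩ := hψ
  have hfib : ∀ ω ∈ S.consistent t m,
      (ρ (S.costNext σ t m u ω).1 (S.costNext σ t m u ω).2 (σ t m) u).toReal
          + ψ (S.costNext σ t m u ω) + sSup (S.Arange t m) =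
        sSup ((fun y => S.oA y t m.2 + ψ (S.costNext σ t m u y)) ''
          {y ∈ S.consistent t m | S.costNext σ t m u y = S.costNext σ t m u ω}) := by
    intro ω hω
    have hne : {y ∈ S.consistent t m | S.costNext σ t m u y = S.costNext σ t m u ω}.Nonempty :=
      ⟨ω, hω, rfl⟩
    have himg : (fun y => S.oA y t m.2 + ψ (S.costNext σ t m u y)) ''
          {y ∈ S.consistent t m | S.costNext σ t m u y = S.costNext σ t m u ω} =
        (fun y => S.oA y t m.2 + ψ (S.costNext σ t m u ω)) ''
          {y ∈ S.consistent t m | S.costNext σ t m u y = S.costNext σ t m u ω} :=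
      image_congr fun y hy => by rw [hy.2]
    rw [himg,
      csSup_image_add_const hne ((bddAbove_Arange t m).mono (image_mono (sep_subset _ _))),
      toReal_rho_costNext σ hinfo hm hω]
    ring
  rw [← csSup_image_eq_of_eq_csSup_fiber hm (S.costNext σ t m u)
      ⟨S.amax + B, forall_mem_image.2 fun ω hω => add_le_add (S.oA_mem_Icc ..).2 (hB ⟨ω, hω, rfl⟩)⟩
      hfib,
    ← csSup_image_add_const ((hm.image _).mono (image_costNext_eq σ hinfo hm).le)
      (bddAbove_toReal_add_image σ hinfo hm ⟨B, hB⟩),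
    ← image_costNext_eq σ hinfo hm, image_image]

end

section

variable {S : Sys} {t : ℕ} {m : S.Mem t}

lemma le_Vopt_of_le_Vopt_nextMem (hm : (S.consistent t m).Nonempty) {Q : S.U → (ℕ → S.W) → ℝ}
    {Ψ : S.U → ℝ} {c d : ℝ} (hΨ : BddBelow (range Ψ))
    (hQ : ∀ u, ∀ ω ∈ S.consistent t m, Q u ω + c ≤ S.Vopt (t + 1) (S.nextMem t m u ω))
    (hQsup : ∀ u, sSup (Q u '' S.consistent t m) = S.γ ^ t * Ψ u + d) :
    S.γ ^ t * sInf (range Ψ) + d + c ≤ S.Vopt t m := by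
  refine le_Vopt hm fun g hg => ?_
  have hsup := csSup_image_le_csSup_image_add hm (bddAbove_Vopt_nextMem t m (g t m))
    (f := Q (g t m)) (c := -c) fun ω hω => by linarith [hQ (g t m) ω hω]
  have hinf := mul_le_mul_of_nonneg_left (csInf_le hΨ ⟨g t m, rfl⟩) (pow_nonneg S.hγ0.le t)
  linarith [hQsup (g t m), sSup_Vopt_nextMem_le_V hg hm]

lemma Vopt_le_of_Vopt_nextMem_le (hm : (S.consistent t m).Nonempty) {Q : S.U → (ℕ → S.W) → ℝ}
    {Ψ : S.U → ℝ} {c d : ℝ} (hQbdd : ∀ u, BddAbove (Q u '' S.consistent t m))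
    (hQ : ∀ u, ∀ ω ∈ S.consistent t m, S.Vopt (t + 1) (S.nextMem t m u ω) ≤ Q u ω + c)
    (hQsup : ∀ u, sSup (Q u '' S.consistent t m) = S.γ ^ t * Ψ u + d) :
    S.Vopt t m ≤ S.γ ^ t * sInf (range Ψ) + d + c := by
  have hγt := pow_pos S.hγ0 t
  have hu (u : S.U) : (S.Vopt t m - d - c) / S.γ ^ t ≤ Ψ u := by
    rw [div_le_iff₀' hγt]
    linarith [Vopt_le_sSup_Vopt_nextMem hm u, csSup_image_le_csSup_image_add hm (hQbdd u) (hQ u),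
      hQsup u]
  have := mul_le_mul_of_nonneg_left (le_csInf (range_nonempty Ψ) (forall_mem_range.2 hu)) hγt.le
  rw [mul_div_cancel₀ _ hγt.ne'] at this
  linarith

end

section

variable {S : Sys} {t : ℕ} {m : S.Mem t} {Ss : Type} (σ : (t : ℕ) → S.Mem t → Ss)
  {ρ : ℝ → Ss → Ss → S.U → EReal}
  (hinfo : ∀ (t : ℕ) (m : S.Mem t) (u : S.U) (c : ℝ) (s : Ss),
      S.rcs σ t c s m u = ρ c s (σ t m) u)
include hinfo

lemma sSup_Arange_nextMem_add_eq (hm : (S.consistent t m).Nonempty) (u : S.U) (Λ : Ss → ℝ)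
    (hQ : BddAbove ((fun ω => sSup (S.Arange (t + 1) (S.nextMem t m u ω))
        + S.γ ^ (t + 1) * Λ (σ (t + 1) (S.nextMem t m u ω))) '' S.consistent t m)) :
    sSup ((fun ω => sSup (S.Arange (t + 1) (S.nextMem t m u ω))
        + S.γ ^ (t + 1) * Λ (σ (t + 1) (S.nextMem t m u ω))) '' S.consistent t m) =
      S.γ ^ t * sSup ((fun p : ℝ × Ss => p.1 + S.γ * Λ p.2 + (ρ p.1 p.2 (σ t m) u).toReal / S.γ ^ t)
        '' {p | ρ p.1 p.2 (σ t m) u ≠ ⊥}) + sSup (S.Arange t m) := by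
  have hγt := pow_pos S.hγ0 t
  have hΛ : BddAbove ((fun ω => S.γ ^ (t + 1) * Λ (σ (t + 1) (S.nextMem t m u ω))) ''
      S.consistent t m) := by
    obtain ⟨B, hB⟩ := hQ
    refine ⟨B, forall_mem_image.2 fun ω hω => ?_⟩
    have := hB ⟨ω, hω, rfl⟩
    dsimp only at this
    linarith [(sSup_Arange_mem_Icc ⟨ω, mem_consistent_nextMem t m u ω⟩).1]
  set ψ : ℝ × Ss → ℝ := fun p => S.γ ^ t * p.1 + S.γ ^ (t + 1) * Λ p.2
  have hψ : BddAbove ((fun ω => ψ (S.costNext σ t m u ω)) '' S.consistent t m) := by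
    obtain ⟨B, hB⟩ := hΛ
    refine ⟨S.γ ^ t * S.cmax + B, forall_mem_image.2 fun ω hω => ?_⟩
    exact add_le_add (mul_le_mul_of_nonneg_left (S.hcost ..).2 hγt.le) (hB ⟨ω, hω, rfl⟩)
  have hA : (fun ω => S.oA ω (t + 1) (Fin.snoc m.2 u)
      + S.γ ^ (t + 1) * Λ (σ (t + 1) (S.nextMem t m u ω))) =
      fun ω => S.oA ω t m.2 + ψ (S.costNext σ t m u ω) := funext fun ω => by
    rw [oA_snoc, oc]
    simp only [ψ, costNext, oc]
    ring
  have hρψ : (fun p : ℝ × Ss => (ρ p.1 p.2 (σ t m) u).toReal + ψ p) = fun p => S.γ ^ t *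
      (p.1 + S.γ * Λ p.2 + (ρ p.1 p.2 (σ t m) u).toReal / S.γ ^ t) + 0 := funext fun p => by
    simp only [ψ]
    field_simp
    ring
  have hbdd := bddAbove_toReal_add_image σ hinfo hm hψ
  rw [hρψ] at hbdd
  have hφ := (monotone_id.div_const hγt.le).map_bddAbove hbdd
  rw [image_image] at hφ
  simp only [add_zero, mul_div_cancel_left₀ _ hγt.ne', id] at hφ
  rw [sSup_sSup_Arange_nextMem_add hm (fun M => S.γ ^ (t + 1) * Λ (σ (t + 1) M)) hΛ, hA,
    sSup_oA_add_eq σ hinfo hm ψ hψ, hρψ,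
    csSup_image_mul_add ((image_costNext_eq σ hinfo hm).subst (hm.image _)) hφ hγt.le, add_zero]

end

section

def VoptBounds {S : Sys} {Ss : Type} (σ : (t : ℕ) → S.Mem t → Ss) (ρ : ℝ → Ss → Ss → S.U → EReal)
    (n t : ℕ) (m : S.Mem t) : Prop :=
  S.γ ^ (n + t) * S.cmin / (1 - S.γ) + S.γ ^ t * DPopIter S.γ ρ n (σ t m) (S.γ ^ t)
      + sSup (S.Arange t m) ≤ S.Vopt t m ∧
    S.Vopt t m ≤ sSup (S.Arange t m) + S.γ ^ t * DPopIter S.γ ρ n (σ t m) (S.γ ^ t)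
      + S.γ ^ (n + t) * S.cmax / (1 - S.γ)

variable {S : Sys} {t : ℕ} {m : S.Mem t} {Ss : Type} {σ : (t : ℕ) → S.Mem t → Ss}
  {ρ : ℝ → Ss → Ss → S.U → EReal}

lemma voptBounds_zero (hm : (S.consistent t m).Nonempty) : S.VoptBounds σ ρ 0 t m := by
  have h₁ := sSup_Arange_add_le_Vopt hm
  have h₂ := Vopt_le_sSup_Arange_add hm
  simp only [VoptBounds, DPopIter, zero_add, mul_zero, add_zero, mul_div_assoc]
  exact ⟨by linarith, by rw [← amax]; linarith⟩

lemma voptBounds_succ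
    (hinfo : ∀ (t : ℕ) (m : S.Mem t) (u : S.U) (c : ℝ) (s : Ss),
      S.rcs σ t c s m u = ρ c s (σ t m) u)
    (hm : (S.consistent t m).Nonempty) {n : ℕ}
    (ih : ∀ M : S.Mem (t + 1), (S.consistent (t + 1) M).Nonempty → S.VoptBounds σ ρ n (t + 1) M) :
    S.VoptBounds σ ρ (n + 1) t m := by
  have hγt := pow_pos S.hγ0 t
  set Λ : Ss → ℝ := fun s => DPopIter S.γ ρ n s (S.γ ^ (t + 1))
  set Q : S.U → (ℕ → S.W) → ℝ := fun u ω => sSup (S.Arange (t + 1) (S.nextMem t m u ω))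
    + S.γ ^ (t + 1) * Λ (σ (t + 1) (S.nextMem t m u ω))
  set Ψ : S.U → ℝ := fun u => sSup ((fun p : ℝ × Ss =>
    p.1 + S.γ * Λ p.2 + (ρ p.1 p.2 (σ t m) u).toReal / S.γ ^ t) '' {p | ρ p.1 p.2 (σ t m) u ≠ ⊥})
  have hDP : DPopIter S.γ ρ (n + 1) (σ t m) (S.γ ^ t) = sInf (range Ψ) := by
    simp only [DPopIter, DPop, Ψ, Λ, ← pow_succ']
  set cLo := S.γ ^ (n + 1 + t) * S.cmin / (1 - S.γ)
  set cHi := S.γ ^ (n + 1 + t) * S.cmax / (1 - S.γ)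
  have hcLo : 0 ≤ cLo := div_nonneg (mul_nonneg (pow_nonneg S.hγ0.le _) S.hcmin) S.one_sub_γ_pos.le
  have hIH (u : S.U) (ω : ℕ → S.W) : cLo + Q u ω ≤ S.Vopt (t + 1) (S.nextMem t m u ω) ∧
      S.Vopt (t + 1) (S.nextMem t m u ω) ≤ Q u ω + cHi := by
    obtain ⟨h₁, h₂⟩ := ih _ ⟨ω, mem_consistent_nextMem t m u ω⟩
    rw [show n + (t + 1) = n + 1 + t by omega] at h₁ h₂
    exact ⟨by linarith, by linarith⟩
  have hQ_le (u : S.U) (ω : ℕ → S.W) : Q u ω ≤ S.amax + S.γ ^ (t + 1) * S.amax := by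
    linarith [(hIH u ω).1, Vopt_le_amax_add ⟨ω, mem_consistent_nextMem t m u ω⟩]
  have hQ_ge (u : S.U) (ω : ℕ → S.W) : -cHi ≤ Q u ω := by
    linarith [(hIH u ω).2, Vopt_nonneg (t + 1) (S.nextMem t m u ω)]
  have hQbdd (u : S.U) : BddAbove (Q u '' S.consistent t m) :=
    ⟨_, forall_mem_image.2 fun ω _ => hQ_le u ω⟩
  have hQsup (u : S.U) : sSup (Q u '' S.consistent t m) = S.γ ^ t * Ψ u + sSup (S.Arange t m) :=
    sSup_Arange_nextMem_add_eq σ hinfo hm u Λ (hQbdd u)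
  have hΨ : BddBelow (range Ψ) := by
    obtain ⟨ω, hω⟩ := hm
    refine ⟨(-cHi - sSup (S.Arange t m)) / S.γ ^ t, forall_mem_range.2 fun u => ?_⟩
    rw [div_le_iff₀' hγt]
    linarith [hQsup u, le_csSup (hQbdd u) ⟨ω, hω, rfl⟩, hQ_ge u ω]
  rw [VoptBounds, hDP]
  constructor
  · linarith [le_Vopt_of_le_Vopt_nextMem hm hΨ (c := cLo)
      (fun u ω _ => by linarith [(hIH u ω).1]) hQsup]
  · linarith [Vopt_le_of_Vopt_nextMem_le hm hQbdd (fun u ω _ => (hIH u ω).2) hQsup]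

end

end Sys

theorem stmt5_general (S : Sys) {Ss : Type}
    (σ : (t : ℕ) → S.Mem t → Ss) (ρ : ℝ → Ss → Ss → S.U → EReal)
    (hinfo : ∀ (t : ℕ) (m : S.Mem t) (u : S.U) (c : ℝ) (s : Ss),
      S.rcs σ t c s m u = ρ c s (σ t m) u)
    (n t : ℕ) (m : S.Mem t) (hm : (S.consistent t m).Nonempty) :
    S.γ ^ (n+t) * S.cmin / (1 - S.γ) + S.γ ^ t * DPopIter S.γ ρ n (σ t m) (S.γ ^ t)
        + sSup (S.Arange t m) ≤ S.Vopt t m ∧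
      S.Vopt t m ≤ sSup (S.Arange t m) + S.γ ^ t * DPopIter S.γ ρ n (σ t m) (S.γ ^ t)
        + S.γ ^ (n+t) * S.cmax / (1 - S.γ) := by
  induction n generalizing t m with
  | zero => exact Sys.voptBounds_zero hm
  | succ n ih => exact Sys.voptBounds_succ hinfo hm fun M hM => ih (t + 1) M hM

theorem stmt5 (S : Sys) {Ss : Type} [Nonempty Ss] [MetricSpace Ss]
    (hSb : Bornology.IsBounded (Set.univ : Set Ss))
    (σ : (t : ℕ) → S.Mem t → Ss) (ρ : ℝ → Ss → Ss → S.U → EReal)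
    (hρ : ∀ c s' s u, ρ c s' s u = ⊥ ∨
      ∃ x : ℝ, ρ c s' s u = (x : EReal) ∧ x ∈ Set.Icc (-S.amax) 0)
    (hinfo : ∀ (t : ℕ) (m : S.Mem t) (u : S.U) (c : ℝ) (s : Ss),
      S.rcs σ t c s m u = ρ c s (σ t m) u)
    (n t : ℕ) (m : S.Mem t) (hm : (S.consistent t m).Nonempty) :
    S.γ ^ (n+t) * S.cmin / (1 - S.γ) + S.γ ^ t * DPopIter S.γ ρ n (σ t m) (S.γ ^ t)
        + sSup (S.Arange t m) ≤ S.Vopt t m ∧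
      S.Vopt t m ≤ sSup (S.Arange t m) + S.γ ^ t * DPopIter S.γ ρ n (σ t m) (S.γ ^ t)
        + S.γ ^ (n+t) * S.cmax / (1 - S.γ) :=
  stmt5_general S σ ρ hinfo n t m hm
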